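/- In the avg-EQ reduction instance built from a simple graph H = (V, E) and an integer k ≥ 4 with |V| + |E| ≥ k², suppose K ⊆ V is a clique of size k in H. Let C consist of the vertex players v' for v ∈ K, the edge players e' for all edges e of H with both endpoints in K, and the incidence players b_{x,e} and b_{y,e} for each such edge e = xy. Then |C| = k + 3·(k choose 2), and under avg-EQ utilities every player i ∈ C satisfies: util_i(C) = ((3k−3)/k)·n − (|C| − 1 − (3k−3)/k) if i is a vertex player, util_i(C) = 2n − (|C| − 3) if i is an edge player, and util_i(C) = ((k+3)/3)·n − (|C| − 1 − (k+3)/3) if i is an incidence player; consequently, C blocks the coalition structure Γ. -/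

import Mathlib

open Finset
open scoped Classical

section AHGDefs

variable {N : Type*} [Fintype N] [DecidableEq N]

/-- The set of friends of player `i` inside coalition `C`. -/
noncomputable def friendsIn (G : SimpleGraph N) (C : Finset N) (i : N) : Finset N :=
  C.filter fun j => G.Adj i j

/-- The friend-oriented valuation of coalition `C` by player `i`:
`val_i(C) = n·|F_i ∩ C| − |E_i ∩ C|`. -/
noncomputable def fval (G : SimpleGraph N) (C : Finset N) (i : N) : ℤ :=
  (Fintype.card N : ℤ) * ((friendsIn G C i).card : ℤ)
    - ((C.filter fun j => ¬ G.Adj i j ∧ j ≠ i).card : ℤ)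

/-- Average-based equal-treatment utility. -/
noncomputable def utilAvgEQ (G : SimpleGraph N) (C : Finset N) (i : N) : ℚ :=
  (∑ c ∈ insert i (friendsIn G C i), (fval G C c : ℚ)) /
    ((insert i (friendsIn G C i)).card : ℚ)

/-- Average-based altruistic-treatment utility with weight `w`. -/
noncomputable def utilAvgAL (G : SimpleGraph N) (w : ℚ) (C : Finset N) (i : N) : ℚ :=
  (fval G C i : ℚ) +
    w * (if (friendsIn G C i).Nonempty then
          (∑ c ∈ friendsIn G C i, (fval G C c : ℚ)) / ((friendsIn G C i).card : ℚ)
         else 0)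

/-- Min-based equal-treatment utility. -/
noncomputable def utilMinEQ (G : SimpleGraph N) (C : Finset N) (i : N) : ℤ :=
  (insert i (friendsIn G C i)).inf' (insert_nonempty _ _) (fval G C)

/-- Min-based altruistic-treatment utility with weight `w`. -/
noncomputable def utilMinAL (G : SimpleGraph N) (w : ℤ) (C : Finset N) (i : N) : ℤ :=
  fval G C i +
    w * (if h : (friendsIn G C i).Nonempty then (friendsIn G C i).inf' h (fval G C) else 0)

/-- A coalition structure (partition of the players), given as the map sending
each player to its coalition. -/
structure CoalitionStructure (N : Type*) [Fintype N] [DecidableEq N] where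
  part : N → Finset N
  mem_part : ∀ i, i ∈ part i
  part_eq : ∀ i j, j ∈ part i → part j = part i

/-- A (nonempty) coalition `C` blocks the coalition structure `Γ`. -/
def Blocks {α : Type*} [LT α] (util : Finset N → N → α) (Γ : CoalitionStructure N)
    (C : Finset N) : Prop :=
  C.Nonempty ∧ ∀ i ∈ C, util (Γ.part i) i < util C i

/-- Core stability: no nonempty coalition blocks `Γ`. -/
def CoreStable {α : Type*} [LT α] (util : Finset N → N → α)
    (Γ : CoalitionStructure N) : Prop :=
  ¬ ∃ C : Finset N, Blocks util Γ C

/-- The base clique of a `(d,k')`-dome gadget on `P` with top player `top`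
and mid players `mid`. -/
noncomputable def domeBase {d : ℕ} (P : Finset N) (top : N) (mid : Fin d → N) : Finset N :=
  P \ insert top (Finset.univ.image mid)

/-- `P` carries a `(d,k')`-dome gadget of the graph `G`, with top player `top`,
mid players `mid i` and fringe players `fringe i`. -/
structure IsDomeGadget (G : SimpleGraph N) (d k' : ℕ) (P : Finset N) (top : N)
    (mid fringe : Fin d → N) : Prop where
  card_eq : P.card = k'
  top_mem : top ∈ P
  mid_mem : ∀ i, mid i ∈ P
  mid_inj : Function.Injective mid
  mid_ne_top : ∀ i, mid i ≠ top
  fringe_mem : ∀ i, fringe i ∈ domeBase P top mid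
  fringe_inj : Function.Injective fringe
  adj_iff : ∀ x ∈ P, ∀ y ∈ P, (G.Adj x y ↔
    ((x = top ∧ ∃ i, y = mid i) ∨ (y = top ∧ ∃ i, x = mid i) ∨
     (x ∈ domeBase P top mid ∧ y ∈ domeBase P top mid ∧ x ≠ y) ∨
     (∃ i, (x = mid i ∧ y = fringe i) ∨ (y = mid i ∧ x = fringe i))))

/-- `P` carries a `(d,k')`-dome gadget with top player `top` (mid and fringe
players existentially quantified). -/
def HasDomeGadget (G : SimpleGraph N) (d k' : ℕ) (P : Finset N) (top : N) : Prop :=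
  ∃ mid fringe : Fin d → N, IsDomeGadget G d k' P top mid fringe

/-- The gadget size `k' = k + 3·(k choose 2) + 1` of the average-based reductions. -/
def avgK' (k : ℕ) : ℕ := k + 3 * Nat.choose k 2 + 1

variable {V : Type*} [Fintype V] [DecidableEq V]

/-- `Γ` is the coalition structure of the average-based reduction instances: its
coalitions are exactly the gadget player sets. -/
def IsAvgGamma (H : SimpleGraph V) (Pv : V → Finset N) (Pe : Sym2 V → Finset N)
    (Pve : V → Sym2 V → Finset N) (Γ : CoalitionStructure N) : Prop :=
  (∀ v : V, ∀ i ∈ Pv v, Γ.part i = Pv v) ∧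
  (∀ e ∈ H.edgeSet, ∀ i ∈ Pe e, Γ.part i = Pe e) ∧
  (∀ (v : V), ∀ e ∈ H.edgeSet, v ∈ e → ∀ i ∈ Pve v e, Γ.part i = Pve v e)

/-- The avg-EQ reduction instance built from the graph `H` and `k ≥ 4`:
`G` is the constructed network of friends; `Pv v` carries a `(k−1,k')`-dome gadget
with top player `vp v`, `Pe e` a `(2,k')`-dome gadget with top player `ep e`, and
`Pve v e` a `(2,k')`-dome gadget with top player `bp v e`. Each `bp v e` is further
adjacent to `vp v` and `ep e`, and there are no other edges. -/
structure AvgEQReduction (H : SimpleGraph V) (k : ℕ) (G : SimpleGraph N)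
    (Pv : V → Finset N) (Pe : Sym2 V → Finset N) (Pve : V → Sym2 V → Finset N)
    (vp : V → N) (ep : Sym2 V → N) (bp : V → Sym2 V → N) : Prop where
  dome_v : ∀ v : V, HasDomeGadget G (k - 1) (avgK' k) (Pv v) (vp v)
  dome_e : ∀ e ∈ H.edgeSet, HasDomeGadget G 2 (avgK' k) (Pe e) (ep e)
  dome_ve : ∀ (v : V), ∀ e ∈ H.edgeSet, v ∈ e →
    HasDomeGadget G 2 (avgK' k) (Pve v e) (bp v e)
  disj_vv : ∀ v w : V, v ≠ w → Disjoint (Pv v) (Pv w)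
  disj_ee : ∀ e ∈ H.edgeSet, ∀ f ∈ H.edgeSet, e ≠ f → Disjoint (Pe e) (Pe f)
  disj_bb : ∀ (v : V), ∀ e ∈ H.edgeSet, v ∈ e → ∀ (w : V), ∀ f ∈ H.edgeSet, w ∈ f →
    (v, e) ≠ (w, f) → Disjoint (Pve v e) (Pve w f)
  disj_v_e : ∀ (v : V), ∀ e ∈ H.edgeSet, Disjoint (Pv v) (Pe e)
  disj_v_b : ∀ (v w : V), ∀ f ∈ H.edgeSet, w ∈ f → Disjoint (Pv v) (Pve w f)
  disj_e_b : ∀ e ∈ H.edgeSet, ∀ (w : V), ∀ f ∈ H.edgeSet, w ∈ f →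
    Disjoint (Pe e) (Pve w f)
  cover : ∀ x : N, (∃ v : V, x ∈ Pv v) ∨ (∃ e ∈ H.edgeSet, x ∈ Pe e) ∨
    (∃ (v : V), ∃ e ∈ H.edgeSet, v ∈ e ∧ x ∈ Pve v e)
  adj_bv : ∀ (v : V), ∀ e ∈ H.edgeSet, v ∈ e → G.Adj (bp v e) (vp v)
  adj_be : ∀ (v : V), ∀ e ∈ H.edgeSet, v ∈ e → G.Adj (bp v e) (ep e)
  adj_cases : ∀ x y : N, G.Adj x y →
    (∃ v : V, x ∈ Pv v ∧ y ∈ Pv v) ∨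
    (∃ e ∈ H.edgeSet, x ∈ Pe e ∧ y ∈ Pe e) ∨
    (∃ (v : V), ∃ e ∈ H.edgeSet, v ∈ e ∧ x ∈ Pve v e ∧ y ∈ Pve v e) ∨
    (∃ (v : V), ∃ e ∈ H.edgeSet, v ∈ e ∧
      ((x = bp v e ∧ y = vp v) ∨ (y = bp v e ∧ x = vp v))) ∨
    (∃ (v : V), ∃ e ∈ H.edgeSet, v ∈ e ∧
      ((x = bp v e ∧ y = ep e) ∨ (y = bp v e ∧ x = ep e)))
end AHGDefs

/-!
The valuation `n·f − (|C| − 1 − f)` of a player with `f` friends in `C` is affine in `f`, so an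
avg-EQ utility is the valuation at the mean friend count over the player's closed neighbourhood
in the coalition. Distinct gadget tops lie in distinct (disjoint) gadgets, so among themselves they
induce only the incidence edges `b_{v,e} ∼ v'`, `b_{v,e} ∼ e'`; inside `C` a vertex player therefore
has `k − 1` friends and edge and incidence players have `2`. This gives every player of `C` a mean
friend count at least the mean `3d/(d+1)` it has at the top of its own `(d,k')`-dome (equal for
vertex and edge players, `(k+3)/3 > 2` for incidence players), while `C` has one player fewer than a
dome, which strictly raises the utility.
-/

/-- `val_i(C)` for a player with `a` friends in a coalition of `c` players, among `n` players. -/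
def friendVal (n c a : ℚ) : ℚ := a * n - (c - 1 - a)

lemma friendVal_lt_friendVal {n c a a' : ℚ} (hn : 0 ≤ n) (ha : a' ≤ a) :
    friendVal n (c + 1) a' < friendVal n c a := by
  unfold friendVal
  nlinarith

section Graph

variable {α : Type*} (G : SimpleGraph α)

noncomputable def nbhdMeanDegree (S : Finset α) (a : α) : ℚ :=
  (#(S.filter (G.Adj a)) + ∑ b ∈ S.filter (G.Adj a), (#(S.filter (G.Adj b)) : ℚ)) /
    (#(S.filter (G.Adj a)) + 1)

lemma nbhdMeanDegree_of_card_eq {S : Finset α} {a : α} {d m : ℕ}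
    (hd : #(S.filter (G.Adj a)) = d) (hm : ∀ b ∈ S.filter (G.Adj a), #(S.filter (G.Adj b)) = m) :
    nbhdMeanDegree G S a = (d + d * m) / (d + 1) := by
  rw [nbhdMeanDegree, sum_congr rfl fun b hb => congrArg (Nat.cast : ℕ → ℚ) (hm b hb),
    sum_const, hd, nsmul_eq_mul]

lemma nbhdMeanDegree_image {β : Type*} [DecidableEq β] (G' : SimpleGraph β) {S : Finset α}
    {f : α → β} (hf : Set.InjOn f S) (hadj : ∀ a ∈ S, ∀ b ∈ S, G'.Adj (f a) (f b) ↔ G.Adj a b)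
    {a : α} (ha : a ∈ S) :
    nbhdMeanDegree G' (S.image f) (f a) = nbhdMeanDegree G S a := by
  have hfilter : ∀ a ∈ S, (S.image f).filter (G'.Adj (f a)) = (S.filter (G.Adj a)).image f := by
    intro a ha
    rw [filter_image]
    congr 1
    exact filter_congr fun b hb => hadj a ha b hb
  have hcard : ∀ a ∈ S, #((S.image f).filter (G'.Adj (f a))) = #(S.filter (G.Adj a)) := by
    intro a ha
    rw [hfilter a ha, card_image_of_injOn (hf.mono (filter_subset _ _))]
  rw [nbhdMeanDegree, nbhdMeanDegree, hcard a ha, hfilter a ha,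
    sum_image fun b hb c hc => hf (filter_subset _ _ hb) (filter_subset _ _ hc)]
  congr 2
  exact sum_congr rfl fun b hb => by rw [hcard b (filter_subset _ _ hb)]

end Graph

section Valuation

variable {N : Type*} [DecidableEq N] (G : SimpleGraph N) {C : Finset N} {i : N}

lemma card_friendsIn_add_card_enemies (hi : i ∈ C) :
    #(friendsIn G C i) + #(C.filter fun j => ¬ G.Adj i j ∧ j ≠ i) + 1 = #C := by
  have hsplit : C.filter (fun j => ¬ G.Adj i j) =
      insert i (C.filter fun j => ¬ G.Adj i j ∧ j ≠ i) := by
    ext j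
    by_cases hji : j = i
    · subst hji; simp [hi]
    · simp [hji]
  have hnot : i ∉ C.filter fun j => ¬ G.Adj i j ∧ j ≠ i := by simp
  rw [← card_filter_add_card_filter_not (s := C) (fun j => G.Adj i j), hsplit,
    card_insert_of_notMem hnot, friendsIn]
  ring

lemma fval_eq_friendVal [Fintype N] (hi : i ∈ C) :
    (fval G C i : ℚ) = friendVal (Fintype.card N) #C #(friendsIn G C i) := by
  have h := card_friendsIn_add_card_enemies G hi
  rw [fval, friendVal, ← h]
  push_cast
  ring

lemma utilAvgEQ_eq_friendVal [Fintype N] (hi : i ∈ C) :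
    utilAvgEQ G C i = friendVal (Fintype.card N) #C (nbhdMeanDegree G C i) := by
  have hnot : i ∉ friendsIn G C i := by simp [friendsIn]
  have hval : ∀ j ∈ insert i (friendsIn G C i),
      (fval G C j : ℚ) = (Fintype.card N + 1) * #(friendsIn G C j) - (#C - 1) := by
    intro j hj
    have hjC : j ∈ C := insert_subset hi (filter_subset _ C) hj
    rw [fval_eq_friendVal G hjC, friendVal]
    ring
  rw [utilAvgEQ, sum_congr rfl hval, sum_sub_distrib, ← mul_sum, sum_insert hnot,
    card_insert_of_notMem hnot, nbhdMeanDegree, friendVal, sum_const, card_insert_of_notMem hnot]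
  simp only [friendsIn, nsmul_eq_mul]
  push_cast
  field_simp
  ring

end Valuation

section Dome

variable {N : Type*} [DecidableEq N] {G : SimpleGraph N} {d k' : ℕ} {P : Finset N}
  {top : N} {mid fringe : Fin d → N}

lemma top_notMem_domeBase : top ∉ domeBase P top mid := by simp [domeBase]

lemma mid_notMem_domeBase (i : Fin d) : mid i ∉ domeBase P top mid := by simp [domeBase]

namespace IsDomeGadget

variable (h : IsDomeGadget G d k' P top mid fringe)
include h

lemma friendsIn_top : friendsIn G P top = univ.image mid := by
  ext y
  simp only [friendsIn, mem_filter, mem_image, mem_univ, true_and]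
  constructor
  · rintro ⟨hy, hadj⟩
    rcases (h.adj_iff top h.top_mem y hy).1 hadj with
      ⟨-, i, rfl⟩ | ⟨-, i, hi⟩ | ⟨hbase, -⟩ | ⟨i, ⟨hi, -⟩ | ⟨-, hi⟩⟩
    · exact ⟨i, rfl⟩
    · exact absurd hi.symm (h.mid_ne_top i)
    · exact absurd hbase top_notMem_domeBase
    · exact absurd hi.symm (h.mid_ne_top i)
    · exact absurd (hi ▸ h.fringe_mem i) top_notMem_domeBase
  · rintro ⟨i, rfl⟩
    exact ⟨h.mid_mem i, (h.adj_iff _ h.top_mem _ (h.mid_mem i)).2 (Or.inl ⟨rfl, i, rfl⟩)⟩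

lemma friendsIn_mid (i : Fin d) : friendsIn G P (mid i) = {top, fringe i} := by
  ext y
  simp only [friendsIn, mem_filter, mem_insert, mem_singleton]
  constructor
  · rintro ⟨hy, hadj⟩
    rcases (h.adj_iff _ (h.mid_mem i) y hy).1 hadj with
      ⟨hi, -⟩ | ⟨hy, -⟩ | ⟨hbase, -⟩ | ⟨j, ⟨hj, rfl⟩ | ⟨-, hj⟩⟩
    · exact absurd hi (h.mid_ne_top i)
    · exact Or.inl hy
    · exact absurd hbase (mid_notMem_domeBase i)
    · exact Or.inr (by rw [h.mid_inj hj])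
    · exact absurd (hj ▸ h.fringe_mem j) (mid_notMem_domeBase (P := P) (top := top) i)
  · have hfringeP : fringe i ∈ P := (mem_sdiff.1 (h.fringe_mem i)).1
    rintro (rfl | rfl)
    · exact ⟨h.top_mem, (h.adj_iff _ (h.mid_mem i) _ h.top_mem).2 (Or.inr (Or.inl ⟨rfl, i, rfl⟩))⟩
    · exact ⟨hfringeP, (h.adj_iff _ (h.mid_mem i) _ hfringeP).2
        (Or.inr (Or.inr (Or.inr ⟨i, Or.inl ⟨rfl, rfl⟩⟩)))⟩

lemma card_friendsIn_mid (i : Fin d) : #(friendsIn G P (mid i)) = 2 := by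
  rw [h.friendsIn_mid i]
  exact card_pair fun heq => top_notMem_domeBase (heq ▸ h.fringe_mem i)

end IsDomeGadget

lemma HasDomeGadget.utilAvgEQ_top [Fintype N] (h : HasDomeGadget G d k' P top) :
    utilAvgEQ G P top = friendVal (Fintype.card N) k' (3 * d / (d + 1)) := by
  obtain ⟨mid, fringe, h⟩ := h
  have hmean : nbhdMeanDegree G P top = (d + d * 2) / (d + 1) := by
    refine nbhdMeanDegree_of_card_eq G (m := 2) ?_ ?_
    · change #(friendsIn G P top) = d
      rw [h.friendsIn_top, card_image_of_injective _ h.mid_inj, card_univ, Fintype.card_fin]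
    · intro b hb
      change b ∈ friendsIn G P top at hb
      rw [h.friendsIn_top] at hb
      obtain ⟨i, -, rfl⟩ := mem_image.1 hb
      exact h.card_friendsIn_mid i
  rw [utilAvgEQ_eq_friendVal G h.top_mem, h.card_eq, hmean]
  ring_nf

end Dome

/-- Indices of the gadgets `P_v`, `P_e` and `P_{v,e}` of the reduction. -/
inductive GadgetIdx (V : Type*)
  | vertex (v : V)
  | edge (e : Sym2 V)
  | incidence (v : V) (e : Sym2 V)

namespace GadgetIdx

variable {V N : Type*}

def IsValid (H : SimpleGraph V) : GadgetIdx V → Prop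
  | vertex _ => True
  | edge e => e ∈ H.edgeSet
  | incidence v e => e ∈ H.edgeSet ∧ v ∈ e

def incidenceGraph : SimpleGraph (GadgetIdx V) :=
  SimpleGraph.fromRel fun a b => ∃ v e, a = incidence v e ∧ (b = vertex v ∨ b = edge e)

def gadget (Pv : V → Finset N) (Pe : Sym2 V → Finset N) (Pve : V → Sym2 V → Finset N) :
    GadgetIdx V → Finset N
  | vertex v => Pv v
  | edge e => Pe e
  | incidence v e => Pve v e

def top (vp : V → N) (ep : Sym2 V → N) (bp : V → Sym2 V → N) : GadgetIdx V → N
  | vertex v => vp v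
  | edge e => ep e
  | incidence v e => bp v e

def midCount (k : ℕ) : GadgetIdx V → ℕ
  | vertex _ => k - 1
  | edge _ => 2
  | incidence _ _ => 2

end GadgetIdx

open GadgetIdx

namespace AvgEQReduction

variable {V N : Type*} [DecidableEq N]
  {H : SimpleGraph V} {k : ℕ} {G : SimpleGraph N} {Pv : V → Finset N} {Pe : Sym2 V → Finset N}
  {Pve : V → Sym2 V → Finset N} {vp : V → N} {ep : Sym2 V → N} {bp : V → Sym2 V → N}
  (R : AvgEQReduction H k G Pv Pe Pve vp ep bp) {a b : GadgetIdx V}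
include R

lemma hasDomeGadget (ha : a.IsValid H) :
    HasDomeGadget G (a.midCount k) (avgK' k) (a.gadget Pv Pe Pve) (a.top vp ep bp) := by
  cases a with
  | vertex v => exact R.dome_v v
  | edge e => exact R.dome_e e ha
  | incidence v e => exact R.dome_ve v e ha.1 ha.2

lemma top_mem_gadget (ha : a.IsValid H) : a.top vp ep bp ∈ a.gadget Pv Pe Pve :=
  let ⟨_, _, h⟩ := R.hasDomeGadget ha
  h.top_mem

lemma disjoint_gadget (ha : a.IsValid H) (hb : b.IsValid H) (hab : a ≠ b) :
    Disjoint (a.gadget Pv Pe Pve) (b.gadget Pv Pe Pve) := by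
  cases a with
  | vertex v => cases b with
    | vertex w => exact R.disj_vv v w fun h => hab (h ▸ rfl)
    | edge f => exact R.disj_v_e v f hb
    | incidence w f => exact R.disj_v_b v w f hb.1 hb.2
  | edge e => cases b with
    | vertex w => exact (R.disj_v_e w e ha).symm
    | edge f => exact R.disj_ee e ha f hb fun h => hab (h ▸ rfl)
    | incidence w f => exact R.disj_e_b e ha w f hb.1 hb.2
  | incidence v e => cases b with
    | vertex w => exact (R.disj_v_b w v e ha.1 ha.2).symm
    | edge f => exact (R.disj_e_b f hb v e ha.1 ha.2).symm
    | incidence w f =>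
      exact R.disj_bb v e ha.1 ha.2 w f hb.1 hb.2 fun h => hab (by simp_all)

lemma eq_of_top_mem_gadget (ha : a.IsValid H) (hb : b.IsValid H)
    (h : a.top vp ep bp ∈ b.gadget Pv Pe Pve) : a = b := by
  by_contra hab
  exact disjoint_left.1 (R.disjoint_gadget ha hb hab) (R.top_mem_gadget ha) h

lemma eq_of_top_eq (ha : a.IsValid H) (hb : b.IsValid H)
    (h : a.top vp ep bp = b.top vp ep bp) : a = b :=
  R.eq_of_top_mem_gadget ha hb (h ▸ R.top_mem_gadget hb)

lemma top_injOn : Set.InjOn (top vp ep bp) {a | a.IsValid H} :=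
  fun _ ha _ hb => R.eq_of_top_eq ha hb

lemma adj_top_iff (ha : a.IsValid H) (hb : b.IsValid H) :
    G.Adj (a.top vp ep bp) (b.top vp ep bp) ↔ incidenceGraph.Adj a b := by
  constructor
  · intro hadj
    have same_gadget : ∀ c : GadgetIdx V, c.IsValid H → a.top vp ep bp ∈ c.gadget Pv Pe Pve →
        b.top vp ep bp ∈ c.gadget Pv Pe Pve → False := fun c hc hac hbc => by
      rw [R.eq_of_top_mem_gadget ha hc hac, R.eq_of_top_mem_gadget hb hc hbc] at hadj
      exact G.irrefl hadj
    rcases R.adj_cases _ _ hadj with ⟨v, hav, hbv⟩ | ⟨e, he, hae, hbe⟩ | ⟨v, e, he, hv, hae, hbe⟩ |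
      ⟨v, e, he, hv, ⟨hae, hbv⟩ | ⟨hbe, hav⟩⟩ | ⟨v, e, he, hv, ⟨hae, hbe⟩ | ⟨hbe, hae⟩⟩
    · exact (same_gadget (vertex v) trivial hav hbv).elim
    · exact (same_gadget (edge e) he hae hbe).elim
    · exact (same_gadget (incidence v e) ⟨he, hv⟩ hae hbe).elim
    · rw [R.eq_of_top_eq (b := incidence v e) ha ⟨he, hv⟩ hae,
        R.eq_of_top_eq (b := vertex v) hb trivial hbv]
      simp [incidenceGraph]
    · rw [R.eq_of_top_eq (b := vertex v) ha trivial hav,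
        R.eq_of_top_eq (b := incidence v e) hb ⟨he, hv⟩ hbe]
      simp [incidenceGraph]
    · rw [R.eq_of_top_eq (b := incidence v e) ha ⟨he, hv⟩ hae,
        R.eq_of_top_eq (b := edge e) hb he hbe]
      simp [incidenceGraph]
    · rw [R.eq_of_top_eq (b := edge e) ha he hae,
        R.eq_of_top_eq (b := incidence v e) hb ⟨he, hv⟩ hbe]
      simp [incidenceGraph]
  · intro hI
    simp only [incidenceGraph, SimpleGraph.fromRel_adj] at hI
    obtain ⟨-, ⟨v, e, rfl, rfl | rfl⟩ | ⟨v, e, rfl, rfl | rfl⟩⟩ := hI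
    · exact R.adj_bv v e ha.1 ha.2
    · exact R.adj_be v e ha.1 ha.2
    · exact (R.adj_bv v e hb.1 hb.2).symm
    · exact (R.adj_be v e hb.1 hb.2).symm

lemma utilAvgEQ_image_top [Fintype N] {S : Finset (GadgetIdx V)} (hS : ∀ a ∈ S, a.IsValid H)
    (ha : a ∈ S) :
    utilAvgEQ G (S.image (top vp ep bp)) (a.top vp ep bp) =
      friendVal (Fintype.card N) #(S.image (top vp ep bp)) (nbhdMeanDegree incidenceGraph S a) := by
  rw [utilAvgEQ_eq_friendVal G (mem_image_of_mem _ ha),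
    nbhdMeanDegree_image incidenceGraph G (R.top_injOn.mono hS)
      (fun a ha b hb => R.adj_top_iff (hS a ha) (hS b hb)) ha]

lemma utilAvgEQ_part_top [Fintype N] {Γ : CoalitionStructure N} (hΓ : IsAvgGamma H Pv Pe Pve Γ)
    (ha : a.IsValid H) :
    utilAvgEQ G (Γ.part (a.top vp ep bp)) (a.top vp ep bp) =
      friendVal (Fintype.card N) (avgK' k) (3 * a.midCount k / (a.midCount k + 1)) := by
  have hpart : Γ.part (a.top vp ep bp) = a.gadget Pv Pe Pve := by
    have htop := R.top_mem_gadget ha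
    cases a with
    | vertex v => exact hΓ.1 v _ htop
    | edge e => exact hΓ.2.1 e ha _ htop
    | incidence v e => exact hΓ.2.2 v e ha.1 ha.2 _ htop
  rw [hpart]
  exact (R.hasDomeGadget ha).utilAvgEQ_top

end AvgEQReduction

section EdgeFinsetWithin

variable {V : Type*} [Fintype V] [DecidableEq V]

lemma Sym2.card_filter_mem_of_not_isDiag {e : Sym2 V} (he : ¬ e.IsDiag) :
    #(univ.filter (· ∈ e)) = 2 := by
  rw [← Sym2.card_toFinset_of_not_isDiag e he]
  congr 1
  ext v
  simp [Sym2.mem_toFinset]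

noncomputable def edgeFinsetWithin (H : SimpleGraph V) (K : Finset V) : Finset (Sym2 V) :=
  H.edgeFinset.filter fun e => ∀ v ∈ e, v ∈ K

variable {H : SimpleGraph V} {K : Finset V} {v : V} {e : Sym2 V}

lemma mem_of_mem_edgeFinsetWithin (he : e ∈ edgeFinsetWithin H K) (hv : v ∈ e) : v ∈ K :=
  (mem_filter.1 he).2 v hv

lemma mem_edgeSet_of_mem_edgeFinsetWithin (he : e ∈ edgeFinsetWithin H K) : e ∈ H.edgeSet :=
  SimpleGraph.mem_edgeFinset.1 (mem_filter.1 he).1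

lemma SimpleGraph.IsClique.edgeFinsetWithin_eq (hK : H.IsClique K) :
    edgeFinsetWithin H K = K.offDiag.image Sym2.mk.uncurry := by
  ext e
  induction e using Sym2.ind with
  | _ x y =>
    simp only [edgeFinsetWithin, mem_filter, SimpleGraph.mem_edgeFinset, SimpleGraph.mem_edgeSet,
      Sym2.mem_iff, forall_eq_or_imp, forall_eq, mem_image, mem_offDiag, Prod.exists,
      Function.uncurry_apply_pair, Sym2.eq_iff]
    constructor
    · rintro ⟨hxy, hx, hy⟩
      exact ⟨x, y, ⟨hx, hy, hxy.ne⟩, Or.inl ⟨rfl, rfl⟩⟩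
    · rintro ⟨a, b, ⟨ha, hb, hab⟩, ⟨rfl, rfl⟩ | ⟨rfl, rfl⟩⟩
      · exact ⟨hK ha hb hab, ha, hb⟩
      · exact ⟨hK hb ha hab.symm, hb, ha⟩

lemma SimpleGraph.IsClique.card_edgeFinsetWithin (hK : H.IsClique K) :
    #(edgeFinsetWithin H K) = (#K).choose 2 := by
  rw [hK.edgeFinsetWithin_eq, Sym2.card_image_offDiag]

lemma SimpleGraph.IsClique.card_filter_mem_edgeFinsetWithin (hK : H.IsClique K)
    (hv : v ∈ K) : #((edgeFinsetWithin H K).filter (v ∈ ·)) = #K - 1 := by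
  have hedges : (edgeFinsetWithin H K).filter (v ∈ ·) = (K.erase v).image (s(v, ·)) := by
    rw [hK.edgeFinsetWithin_eq]
    ext e
    induction e using Sym2.ind with
    | _ x y =>
      simp only [mem_filter, mem_image, mem_offDiag, Prod.exists, Function.uncurry_apply_pair,
        mem_erase, Sym2.mem_iff, Sym2.eq_iff]
      grind
  rw [hedges, card_image_of_injective _ fun _ _ => Sym2.congr_right.1, card_erase_of_mem hv]

end EdgeFinsetWithin

section CoalitionIdx

variable {V : Type*} [Fintype V] [DecidableEq V]

noncomputable def coalitionIdx (H : SimpleGraph V) (K : Finset V) : Finset (GadgetIdx V) :=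
  K.image vertex ∪ (edgeFinsetWithin H K).image edge ∪
    (edgeFinsetWithin H K).biUnion fun e => (univ.filter (· ∈ e)).image (incidence · e)

variable {H : SimpleGraph V} {K : Finset V} {k : ℕ} {v : V} {e : Sym2 V}

@[simp] lemma vertex_mem_coalitionIdx : vertex v ∈ coalitionIdx H K ↔ v ∈ K := by
  simp [coalitionIdx]

@[simp] lemma edge_mem_coalitionIdx : edge e ∈ coalitionIdx H K ↔ e ∈ edgeFinsetWithin H K := by
  simp [coalitionIdx]

@[simp] lemma incidence_mem_coalitionIdx :
    incidence v e ∈ coalitionIdx H K ↔ e ∈ edgeFinsetWithin H K ∧ v ∈ e := by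
  simp [coalitionIdx]

lemma isValid_of_mem_coalitionIdx {a : GadgetIdx V} (ha : a ∈ coalitionIdx H K) : a.IsValid H := by
  cases a with
  | vertex v => trivial
  | edge e => exact mem_edgeSet_of_mem_edgeFinsetWithin (edge_mem_coalitionIdx.1 ha)
  | incidence v e =>
    obtain ⟨he, hv⟩ := incidence_mem_coalitionIdx.1 ha
    exact ⟨mem_edgeSet_of_mem_edgeFinsetWithin he, hv⟩

lemma image_top_coalitionIdx {N : Type*} [DecidableEq N] (vp : V → N) (ep : Sym2 V → N)
    (bp : V → Sym2 V → N) :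
    (coalitionIdx H K).image (top vp ep bp) = K.image vp ∪ (edgeFinsetWithin H K).image ep ∪
      (edgeFinsetWithin H K).biUnion fun e => (univ.filter (· ∈ e)).image (bp · e) := by
  simp only [coalitionIdx, image_union, image_image, biUnion_image]
  rfl

lemma filter_adj_vertex_coalitionIdx :
    (coalitionIdx H K).filter (incidenceGraph.Adj (vertex v)) =
      ((edgeFinsetWithin H K).filter (v ∈ ·)).image (incidence v) := by
  ext b
  cases b <;> simp only [mem_filter] <;> simp [incidenceGraph]
  all_goals grind

lemma filter_adj_edge_coalitionIdx (he : e ∈ edgeFinsetWithin H K) :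
    (coalitionIdx H K).filter (incidenceGraph.Adj (edge e)) =
      (univ.filter (· ∈ e)).image (incidence · e) := by
  ext b
  cases b <;> simp only [mem_filter] <;> simp [incidenceGraph]
  all_goals grind

lemma filter_adj_incidence_coalitionIdx (he : e ∈ edgeFinsetWithin H K) (hv : v ∈ e) :
    (coalitionIdx H K).filter (incidenceGraph.Adj (incidence v e)) = {vertex v, edge e} := by
  ext b
  have hvK := mem_of_mem_edgeFinsetWithin he hv
  cases b <;> simp only [mem_filter] <;> simp [incidenceGraph]
  all_goals grind

lemma card_filter_adj_vertex_coalitionIdx (hK : H.IsClique K) (hv : v ∈ K) :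
    #((coalitionIdx H K).filter (incidenceGraph.Adj (vertex v))) = #K - 1 := by
  rw [filter_adj_vertex_coalitionIdx, card_image_of_injective _ fun _ _ h => incidence.inj h |>.2,
    hK.card_filter_mem_edgeFinsetWithin hv]

lemma card_filter_adj_edge_coalitionIdx (he : e ∈ edgeFinsetWithin H K) :
    #((coalitionIdx H K).filter (incidenceGraph.Adj (edge e))) = 2 := by
  rw [filter_adj_edge_coalitionIdx he, card_image_of_injective _ fun _ _ h => incidence.inj h |>.1,
    Sym2.card_filter_mem_of_not_isDiag
      (H.not_isDiag_of_mem_edgeSet (mem_edgeSet_of_mem_edgeFinsetWithin he))]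

lemma card_filter_adj_incidence_coalitionIdx (he : e ∈ edgeFinsetWithin H K) (hv : v ∈ e) :
    #((coalitionIdx H K).filter (incidenceGraph.Adj (incidence v e))) = 2 := by
  rw [filter_adj_incidence_coalitionIdx he hv, card_pair (by simp)]

lemma card_coalitionIdx (hK : H.IsNClique k K) : #(coalitionIdx H K) = k + 3 * k.choose 2 := by
  have hedges : #(edgeFinsetWithin H K) = k.choose 2 := by
    rw [hK.isClique.card_edgeFinsetWithin, hK.card_eq]
  rw [coalitionIdx, card_union_of_disjoint, card_union_of_disjoint,
    card_image_of_injective _ fun _ _ => vertex.inj, card_image_of_injective _ fun _ _ => edge.inj,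
    card_biUnion]
  · rw [sum_congr rfl fun e he =>
      filter_adj_edge_coalitionIdx he ▸ card_filter_adj_edge_coalitionIdx he, sum_const, hedges,
      hK.card_eq, smul_eq_mul]
    ring
  · intro e _ f _ hef
    simp only [Function.onFun, disjoint_left, mem_image]
    rintro _ ⟨_, _, rfl⟩ ⟨_, _, h⟩
    exact hef (incidence.inj h).2.symm
  · simp [disjoint_left]
  · simp only [disjoint_left, mem_union, mem_biUnion, mem_image]
    rintro _ (⟨_, _, rfl⟩ | ⟨_, _, rfl⟩) <;> simp

lemma nbhdMeanDegree_vertex_coalitionIdx (hK : H.IsNClique k K) (hv : v ∈ K) :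
    nbhdMeanDegree incidenceGraph (coalitionIdx H K) (vertex v) = (3 * k - 3) / k := by
  have hk : 1 ≤ k := hK.card_eq ▸ card_pos.2 ⟨v, hv⟩
  rw [nbhdMeanDegree_of_card_eq _ (d := k - 1) (m := 2)
    (by rw [card_filter_adj_vertex_coalitionIdx hK.isClique hv, hK.card_eq])]
  · push_cast [Nat.cast_sub hk]
    rw [sub_add_cancel]
    ring
  · intro b hb
    rw [filter_adj_vertex_coalitionIdx] at hb
    obtain ⟨e, he, rfl⟩ := mem_image.1 hb
    exact card_filter_adj_incidence_coalitionIdx (mem_filter.1 he).1 (mem_filter.1 he).2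

lemma nbhdMeanDegree_edge_coalitionIdx (he : e ∈ edgeFinsetWithin H K) :
    nbhdMeanDegree incidenceGraph (coalitionIdx H K) (edge e) = 2 := by
  rw [nbhdMeanDegree_of_card_eq _ (d := 2) (m := 2) (card_filter_adj_edge_coalitionIdx he)]
  · norm_num
  · intro b hb
    rw [filter_adj_edge_coalitionIdx he] at hb
    obtain ⟨v, hv, rfl⟩ := mem_image.1 hb
    exact card_filter_adj_incidence_coalitionIdx he (mem_filter.1 hv).2

lemma nbhdMeanDegree_incidence_coalitionIdx (hK : H.IsNClique k K)
    (he : e ∈ edgeFinsetWithin H K) (hv : v ∈ e) :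
    nbhdMeanDegree incidenceGraph (coalitionIdx H K) (incidence v e) = (k + 3) / 3 := by
  have hvK := mem_of_mem_edgeFinsetWithin he hv
  have hk : 1 ≤ k := hK.card_eq ▸ card_pos.2 ⟨v, hvK⟩
  rw [nbhdMeanDegree, card_filter_adj_incidence_coalitionIdx he hv,
    filter_adj_incidence_coalitionIdx he hv, sum_pair (by simp),
    card_filter_adj_vertex_coalitionIdx hK.isClique hvK, card_filter_adj_edge_coalitionIdx he,
    hK.card_eq]
  push_cast [Nat.cast_sub hk]
  ring

lemma three_mul_midCount_div_le_nbhdMeanDegree (hK : H.IsNClique k K) (hk : 3 ≤ k)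
    {a : GadgetIdx V} (ha : a ∈ coalitionIdx H K) :
    3 * (a.midCount k : ℚ) / (a.midCount k + 1) ≤
      nbhdMeanDegree incidenceGraph (coalitionIdx H K) a := by
  cases a with
  | vertex v =>
    rw [nbhdMeanDegree_vertex_coalitionIdx hK (vertex_mem_coalitionIdx.1 ha), midCount]
    push_cast [Nat.cast_sub (by omega : 1 ≤ k)]
    rw [sub_add_cancel]
    exact le_of_eq (by ring)
  | edge e =>
    rw [nbhdMeanDegree_edge_coalitionIdx (edge_mem_coalitionIdx.1 ha), midCount]
    norm_num
  | incidence v e =>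
    obtain ⟨he, hv⟩ := incidence_mem_coalitionIdx.1 ha
    rw [nbhdMeanDegree_incidence_coalitionIdx hK he hv, midCount]
    have : (3 : ℚ) ≤ k := by exact_mod_cast hk
    norm_num
    linarith

end CoalitionIdx

theorem avgEQ_clique_coalition_blocks_general {V N : Type*} [Fintype V] [DecidableEq V]
    [Fintype N] [DecidableEq N]
    (H : SimpleGraph V) (k : ℕ) (hk : 4 ≤ k)
    (G : SimpleGraph N) (Pv : V → Finset N) (Pe : Sym2 V → Finset N)
    (Pve : V → Sym2 V → Finset N)
    (vp : V → N) (ep : Sym2 V → N) (bp : V → Sym2 V → N)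
    (R : AvgEQReduction H k G Pv Pe Pve vp ep bp)
    (Γ : CoalitionStructure N) (hΓ : IsAvgGamma H Pv Pe Pve Γ)
    (K : Finset V) (hK : H.IsNClique k K) :
    ∀ EK : Finset (Sym2 V), EK = H.edgeFinset.filter (fun e => ∀ v ∈ e, v ∈ K) →
    ∀ C : Finset N,
      C = K.image vp ∪ EK.image ep ∪
          EK.biUnion (fun e =>
            (Finset.univ.filter (fun v : V => v ∈ e)).image (fun v => bp v e)) →
      C.card = k + 3 * Nat.choose k 2 ∧
      (∀ v ∈ K, utilAvgEQ G C (vp v) =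
        ((3 * (k : ℚ) - 3) / (k : ℚ)) * (Fintype.card N : ℚ)
          - ((C.card : ℚ) - 1 - (3 * (k : ℚ) - 3) / (k : ℚ))) ∧
      (∀ e ∈ EK, utilAvgEQ G C (ep e) =
        2 * (Fintype.card N : ℚ) - ((C.card : ℚ) - 3)) ∧
      (∀ e ∈ EK, ∀ v ∈ e, utilAvgEQ G C (bp v e) =
        (((k : ℚ) + 3) / 3) * (Fintype.card N : ℚ)
          - ((C.card : ℚ) - 1 - ((k : ℚ) + 3) / 3)) ∧
      Blocks (utilAvgEQ G) Γ C := by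
  intro EK hEK C hC
  replace hEK : EK = edgeFinsetWithin H K := hEK
  subst hEK
  replace hC : C = (coalitionIdx H K).image (top vp ep bp) :=
    hC.trans (image_top_coalitionIdx ..).symm
  subst hC
  have hS : ∀ a ∈ coalitionIdx H K, a.IsValid H := fun _ => isValid_of_mem_coalitionIdx
  have hcard : #((coalitionIdx H K).image (top vp ep bp)) = k + 3 * k.choose 2 := by
    rw [card_image_of_injOn (R.top_injOn.mono hS), card_coalitionIdx hK]
  have hutil := fun a (ha : a ∈ coalitionIdx H K) => R.utilAvgEQ_image_top hS ha
  refine ⟨hcard, fun v hv => ?_, fun e he => ?_, fun e he v hv => ?_, ?_, ?_⟩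
  · refine (hutil (vertex v) (by simpa)).trans ?_
    rw [nbhdMeanDegree_vertex_coalitionIdx hK hv, friendVal]
  · refine (hutil (edge e) (by simpa)).trans ?_
    rw [nbhdMeanDegree_edge_coalitionIdx he, friendVal]
    ring
  · refine (hutil (incidence v e) (by simpa using ⟨he, hv⟩)).trans ?_
    rw [nbhdMeanDegree_incidence_coalitionIdx hK he hv, friendVal]
  · obtain ⟨v, hv⟩ := card_pos.1 (hK.card_eq ▸ (by omega : 0 < k))
    exact ⟨vp v, mem_image_of_mem (top vp ep bp) (vertex_mem_coalitionIdx.2 hv)⟩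
  · simp only [mem_image]
    rintro _ ⟨a, ha, rfl⟩
    rw [R.utilAvgEQ_part_top hΓ (hS a ha), hutil a ha, avgK', ← hcard, Nat.cast_add_one]
    exact friendVal_lt_friendVal (Nat.cast_nonneg _)
      (three_mul_midCount_div_le_nbhdMeanDegree hK (by omega) ha)

/-- In the avg-EQ reduction instance, given a clique `K` of size `k` in `H`, the
coalition `C` of the vertex players of `K`, the edge players of all edges inside
`K`, and the corresponding incidence players has `|C| = k + 3·(k choose 2)`, yields
the stated avg-EQ utilities for its vertex, edge, and incidence players, and
consequently blocks `Γ`. -/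
theorem avgEQ_clique_coalition_blocks {V N : Type*} [Fintype V] [DecidableEq V]
    [Fintype N] [DecidableEq N]
    (H : SimpleGraph V) (k : ℕ) (hk : 4 ≤ k)
    (hsize : k ^ 2 ≤ Fintype.card V + H.edgeFinset.card)
    (G : SimpleGraph N) (Pv : V → Finset N) (Pe : Sym2 V → Finset N)
    (Pve : V → Sym2 V → Finset N)
    (vp : V → N) (ep : Sym2 V → N) (bp : V → Sym2 V → N)
    (R : AvgEQReduction H k G Pv Pe Pve vp ep bp)
    (Γ : CoalitionStructure N) (hΓ : IsAvgGamma H Pv Pe Pve Γ)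
    (K : Finset V) (hK : H.IsNClique k K) :
    ∀ EK : Finset (Sym2 V), EK = H.edgeFinset.filter (fun e => ∀ v ∈ e, v ∈ K) →
    ∀ C : Finset N,
      C = K.image vp ∪ EK.image ep ∪
          EK.biUnion (fun e =>
            (Finset.univ.filter (fun v : V => v ∈ e)).image (fun v => bp v e)) →
      C.card = k + 3 * Nat.choose k 2 ∧
      (∀ v ∈ K, utilAvgEQ G C (vp v) =
        ((3 * (k : ℚ) - 3) / (k : ℚ)) * (Fintype.card N : ℚ)
          - ((C.card : ℚ) - 1 - (3 * (k : ℚ) - 3) / (k : ℚ))) ∧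
      (∀ e ∈ EK, utilAvgEQ G C (ep e) =
        2 * (Fintype.card N : ℚ) - ((C.card : ℚ) - 3)) ∧
      (∀ e ∈ EK, ∀ v ∈ e, utilAvgEQ G C (bp v e) =
        (((k : ℚ) + 3) / 3) * (Fintype.card N : ℚ)
          - ((C.card : ℚ) - 1 - ((k : ℚ) + 3) / 3)) ∧
      Blocks (utilAvgEQ G) Γ C :=
  avgEQ_clique_coalition_blocks_general H k hk G Pv Pe Pve vp ep bp R Γ hΓ K hK
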